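/- Let (S0,ρ0) be a finite conjunctive argumentation network, with ρ0 ⊆ (2^{S0}∖{∅})×S0. Form (S1,R1) by adding, for each pair (Y,z)∈ρ0, fresh distinct auxiliary points α(y,Y,z) for each y∈Y and a point β(Y,z), and letting R1 consist of all edges y→α(y,Y,z), α(y,Y,z)→β(Y,z), and β(Y,z)→z (for (Y,z)∈ρ0 and y∈Y). Then a labelling λ0: S0→{in,out,und} is a complete conjunctive labelling of (S0,ρ0) if and only if λ0 is the restriction to S0 of some complete extension λ1 of (S1,R1). -/

import Mathlib

/-! In a complete labelling of `(S1, R1)` each auxiliary point is determined by its attackers: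
`α(y,Y,z)` carries the mirror image of the label of `y`, so `β(Y,z)` is in iff every member of `Y`
is in and out iff some member of `Y` is out. The in/out conditions at a point `z ∈ S0`, whose
attackers are the `β(Y,z)`, are then exactly the conjunctive ones; conversely these forced labels
extend any complete conjunctive labelling to `S1`. The und clauses need no separate argument: on
both sides they say that the in and out conditions both fail. -/

/-- The three Caminada labels. -/
inductive Label where
  | in_ : Label
  | out : Label
  | und : Label
deriving DecidableEq

/-- Caminada labelling / complete extension of an ordinary network `(S, R)`. -/
def IsCompleteExt {S : Type} (R : S → S → Prop) (l : S → Label) : Prop :=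
  (∀ x, l x = .in_ ↔ ∀ y, R y x → l y = .out) ∧
  (∀ x, l x = .out ↔ ∃ y, R y x ∧ l y = .in_) ∧
  (∀ x, l x = .und ↔ ((∀ y, R y x → l y ≠ .in_) ∧ ∃ y, R y x ∧ l y = .und))

/-- Complete conjunctive labelling of a conjunctive network `(S0, ρ0)`:
`z` is out iff some joint attacker `Y` of `z` has all members in; `z` is in iff
every joint attacker of `z` has some member out; `z` is und otherwise (no joint
attacker has all members in, and some joint attacker has no member out). -/
def IsConjComplete {S0 : Type} (rho : Finset S0 → S0 → Prop) (l : S0 → Label) : Prop :=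
  (∀ z, l z = .out ↔ ∃ Y, rho Y z ∧ ∀ y ∈ Y, l y = .in_) ∧
  (∀ z, l z = .in_ ↔ ∀ Y, rho Y z → ∃ y ∈ Y, l y = .out) ∧
  (∀ z, l z = .und ↔
    ((∀ Y, rho Y z → ∃ y ∈ Y, l y ≠ .in_) ∧ (∃ Y, rho Y z ∧ ∀ y ∈ Y, l y ≠ .out)))

/-- The auxiliary `α`-points: one point `α(y,Y,z)` for each `(Y,z) ∈ ρ0` and
each `y ∈ Y`. -/
def AlphaPt {S0 : Type} (rho : Finset S0 → S0 → Prop) : Type :=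
  {p : S0 × Finset S0 × S0 // rho p.2.1 p.2.2 ∧ p.1 ∈ p.2.1}

/-- The auxiliary `β`-points: one point `β(Y,z)` for each `(Y,z) ∈ ρ0`. -/
def BetaPt {S0 : Type} (rho : Finset S0 → S0 → Prop) : Type :=
  {p : Finset S0 × S0 // rho p.1 p.2}

/-- The enlarged set of arguments `S1 = S0 ∪ {α(y,Y,z)} ∪ {β(Y,z)}`. -/
def S1 {S0 : Type} (rho : Finset S0 → S0 → Prop) : Type :=
  S0 ⊕ (AlphaPt rho ⊕ BetaPt rho)

/-- The attack relation `R1` on `S1`: edges `y → α(y,Y,z)`,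
`α(y,Y,z) → β(Y,z)` and `β(Y,z) → z`, for `(Y,z) ∈ ρ0` and `y ∈ Y`. -/
def R1 {S0 : Type} (rho : Finset S0 → S0 → Prop) : S1 rho → S1 rho → Prop
  | .inl y, .inr (.inl a) => y = a.1.1
  | .inr (.inl a), .inr (.inr b) => a.1.2 = b.1
  | .inr (.inr b), .inl z => b.1.2 = z
  | _, _ => False

namespace Label

def flip : Label → Label
  | in_ => out
  | out => in_
  | und => und

@[simp]
theorem flip_eq_in {l : Label} : l.flip = in_ ↔ l = out := by
  cases l <;> decide

@[simp]
theorem flip_eq_out {l : Label} : l.flip = out ↔ l = in_ := by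
  cases l <;> decide

theorem eq_iff_in_out {a b : Label} : a = b ↔ (a = in_ ↔ b = in_) ∧ (a = out ↔ b = out) := by
  cases a <;> cases b <;> decide

theorem eq_und_iff {a : Label} : a = und ↔ a ≠ in_ ∧ a ≠ out := by
  cases a <;> decide

end Label

section Ordinary

variable {S : Type} (R : S → S → Prop) (l : S → Label)

def IsLegalAt (x : S) : Prop :=
  (l x = .in_ ↔ ∀ y, R y x → l y = .out) ∧ (l x = .out ↔ ∃ y, R y x ∧ l y = .in_)

theorem isCompleteExt_iff_forall_isLegalAt : IsCompleteExt R l ↔ ∀ x, IsLegalAt R l x := by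
  refine ⟨fun h x => ⟨h.1 x, h.2.1 x⟩, fun h => ⟨fun x => (h x).1, fun x => (h x).2, fun x => ?_⟩⟩
  rw [Label.eq_und_iff, ne_eq, ne_eq, (h x).1, (h x).2]
  push Not
  constructor
  · rintro ⟨⟨y, hy, hout⟩, hin⟩
    exact ⟨hin, y, hy, Label.eq_und_iff.2 ⟨hin y hy, hout⟩⟩
  · rintro ⟨hin, y, hy, hund⟩
    exact ⟨⟨y, hy, by simp [hund]⟩, hin⟩

end Ordinary

section Conjunctive

variable {S0 : Type} (rho : Finset S0 → S0 → Prop) (l : S0 → Label)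

def IsConjLegalAt (z : S0) : Prop :=
  (l z = .out ↔ ∃ Y, rho Y z ∧ ∀ y ∈ Y, l y = .in_) ∧
    (l z = .in_ ↔ ∀ Y, rho Y z → ∃ y ∈ Y, l y = .out)

theorem isConjComplete_iff_forall_isConjLegalAt :
    IsConjComplete rho l ↔ ∀ z, IsConjLegalAt rho l z := by
  refine ⟨fun h z => ⟨h.1 z, h.2.1 z⟩, fun h => ⟨fun z => (h z).1, fun z => (h z).2, fun z => ?_⟩⟩
  rw [Label.eq_und_iff, ne_eq, ne_eq, (h z).1, (h z).2]
  push Not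
  tauto

def conjLabel (Y : Finset S0) : Label :=
  if ∀ y ∈ Y, l y = .in_ then .in_ else if ∃ y ∈ Y, l y = .out then .out else .und

variable {l}

theorem conjLabel_eq_in {Y : Finset S0} : conjLabel l Y = .in_ ↔ ∀ y ∈ Y, l y = .in_ := by
  unfold conjLabel
  split_ifs <;> simp_all

theorem conjLabel_eq_out {Y : Finset S0} : conjLabel l Y = .out ↔ ∃ y ∈ Y, l y = .out := by
  unfold conjLabel
  split_ifs <;> simp_all

end Conjunctive

section Fibers

variable {S0 : Type} {rho : Finset S0 → S0 → Prop}

theorem AlphaPt.forall_fiber_iff {b : BetaPt rho} (P : S0 → Prop) :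
    (∀ a : AlphaPt rho, a.1.2 = b.1 → P a.1.1) ↔ ∀ y ∈ b.1.1, P y :=
  ⟨fun h y hy => h ⟨(y, b.1), b.2, hy⟩ rfl, fun h a ha => h _ (ha ▸ a.2.2)⟩

theorem AlphaPt.exists_fiber_iff {b : BetaPt rho} (P : S0 → Prop) :
    (∃ a : AlphaPt rho, a.1.2 = b.1 ∧ P a.1.1) ↔ ∃ y ∈ b.1.1, P y :=
  ⟨fun ⟨a, ha, hP⟩ => ⟨_, ha ▸ a.2.2, hP⟩, fun ⟨y, hy, hP⟩ => ⟨⟨(y, b.1), b.2, hy⟩, rfl, hP⟩⟩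

theorem BetaPt.forall_fiber_iff {z : S0} (P : Finset S0 → Prop) :
    (∀ b : BetaPt rho, b.1.2 = z → P b.1.1) ↔ ∀ Y, rho Y z → P Y :=
  ⟨fun h Y hY => h ⟨(Y, z), hY⟩ rfl, fun h b hb => h _ (hb ▸ b.2)⟩

theorem BetaPt.exists_fiber_iff {z : S0} (P : Finset S0 → Prop) :
    (∃ b : BetaPt rho, b.1.2 = z ∧ P b.1.1) ↔ ∃ Y, rho Y z ∧ P Y :=
  ⟨fun ⟨b, hb, hP⟩ => ⟨_, hb ▸ b.2, hP⟩, fun ⟨Y, hY, hP⟩ => ⟨⟨(Y, z), hY⟩, rfl, hP⟩⟩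

end Fibers

namespace S1

variable {S0 : Type} {rho : Finset S0 → S0 → Prop}

/- Named injections into `S1 rho`: the bare `.inr (.inl a)` has type `S0 ⊕ AlphaPt rho ⊕ …`,
which `simp` does not identify with `S1 rho`, so it would refuse to rewrite `l (.inr (.inl a))`. -/
def arg (z : S0) : S1 rho := .inl z

def alpha (a : AlphaPt rho) : S1 rho := .inr (.inl a)

def beta (b : BetaPt rho) : S1 rho := .inr (.inr b)

theorem forall_R1_arg {P : S1 rho → Prop} {z : S0} :
    (∀ x, R1 rho x (arg z) → P x) ↔ ∀ b : BetaPt rho, b.1.2 = z → P (beta b) :=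
  ⟨fun h b hb => h (beta b) hb, fun h => by rintro (_ | _ | b) hb; exacts [hb.elim, hb.elim, h b hb]⟩

theorem exists_R1_arg {P : S1 rho → Prop} {z : S0} :
    (∃ x, R1 rho x (arg z) ∧ P x) ↔ ∃ b : BetaPt rho, b.1.2 = z ∧ P (beta b) :=
  ⟨by rintro ⟨_ | _ | b, hb, hP⟩; exacts [hb.elim, hb.elim, ⟨b, hb, hP⟩],
    fun ⟨b, hb, hP⟩ => ⟨beta b, hb, hP⟩⟩

theorem forall_R1_alpha {P : S1 rho → Prop} {a : AlphaPt rho} :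
    (∀ x, R1 rho x (alpha a) → P x) ↔ P (arg a.1.1) :=
  ⟨fun h => h (arg a.1.1) rfl, fun h => by rintro (y | _ | _) hy; exacts [hy ▸ h, hy.elim, hy.elim]⟩

theorem exists_R1_alpha {P : S1 rho → Prop} {a : AlphaPt rho} :
    (∃ x, R1 rho x (alpha a) ∧ P x) ↔ P (arg a.1.1) :=
  ⟨by rintro ⟨y | _ | _, hy, hP⟩; exacts [hy ▸ hP, hy.elim, hy.elim], fun h => ⟨arg a.1.1, rfl, h⟩⟩

theorem forall_R1_beta {P : S1 rho → Prop} {b : BetaPt rho} :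
    (∀ x, R1 rho x (beta b) → P x) ↔ ∀ a : AlphaPt rho, a.1.2 = b.1 → P (alpha a) :=
  ⟨fun h a ha => h (alpha a) ha, fun h => by rintro (_ | a | _) ha; exacts [ha.elim, h a ha, ha.elim]⟩

theorem exists_R1_beta {P : S1 rho → Prop} {b : BetaPt rho} :
    (∃ x, R1 rho x (beta b) ∧ P x) ↔ ∃ a : AlphaPt rho, a.1.2 = b.1 ∧ P (alpha a) :=
  ⟨by rintro ⟨_ | a | _, ha, hP⟩; exacts [ha.elim, ⟨a, ha, hP⟩, ha.elim],
    fun ⟨a, ha, hP⟩ => ⟨alpha a, ha, hP⟩⟩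

end S1

section Network

open S1

variable {S0 : Type} {rho : Finset S0 → S0 → Prop} {l : S1 rho → Label}

def extendLabelling (l0 : S0 → Label) : S1 rho → Label
  | .inl z => l0 z
  | .inr (.inl a) => (l0 a.1.1).flip
  | .inr (.inr b) => conjLabel l0 b.1.1

theorem isLegalAt_alpha_iff {a : AlphaPt rho} :
    IsLegalAt (R1 rho) l (alpha a) ↔ l (alpha a) = (l (arg a.1.1)).flip := by
  simp only [IsLegalAt, forall_R1_alpha, exists_R1_alpha, Label.eq_iff_in_out (b := Label.flip _),
    Label.flip_eq_in, Label.flip_eq_out]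

theorem isLegalAt_beta_iff (hα : ∀ a, l (alpha a) = (l (arg a.1.1)).flip) {b : BetaPt rho} :
    IsLegalAt (R1 rho) l (beta b) ↔ l (beta b) = conjLabel (l ∘ arg) b.1.1 := by
  simp only [IsLegalAt, forall_R1_beta, exists_R1_beta, hα, Label.flip_eq_in, Label.flip_eq_out,
    Label.eq_iff_in_out (b := conjLabel _ _), conjLabel_eq_in, conjLabel_eq_out, Function.comp_apply]
  exact and_congr (iff_congr .rfl (AlphaPt.forall_fiber_iff fun y => l (arg y) = .in_))
    (iff_congr .rfl (AlphaPt.exists_fiber_iff fun y => l (arg y) = .out))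

theorem isLegalAt_arg_iff (hβ : ∀ b, l (beta b) = conjLabel (l ∘ arg) b.1.1) {z : S0} :
    IsLegalAt (R1 rho) l (arg z) ↔ IsConjLegalAt rho (l ∘ arg) z := by
  simp only [IsLegalAt, IsConjLegalAt, forall_R1_arg, exists_R1_arg, hβ, conjLabel_eq_in,
    conjLabel_eq_out]
  rw [and_comm]
  exact and_congr (iff_congr .rfl (BetaPt.exists_fiber_iff (∀ y ∈ ·, l (arg y) = .in_)))
    (iff_congr .rfl (BetaPt.forall_fiber_iff (∃ y ∈ ·, l (arg y) = .out)))

theorem isCompleteExt_R1_iff :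
    IsCompleteExt (R1 rho) l ↔
      (∀ a, l (alpha a) = (l (arg a.1.1)).flip) ∧
      (∀ b, l (beta b) = conjLabel (l ∘ arg) b.1.1) ∧
      IsConjComplete rho (l ∘ arg) := by
  rw [isCompleteExt_iff_forall_isLegalAt, isConjComplete_iff_forall_isConjLegalAt]
  constructor
  · intro h
    have hα a := isLegalAt_alpha_iff.1 (h (alpha a))
    have hβ b := (isLegalAt_beta_iff hα).1 (h (beta b))
    exact ⟨hα, hβ, fun z => (isLegalAt_arg_iff hβ).1 (h (arg z))⟩
  · rintro ⟨hα, hβ, hconj⟩ (z | a | b)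
    exacts [(isLegalAt_arg_iff hβ).2 (hconj z), isLegalAt_alpha_iff.2 (hα a),
      (isLegalAt_beta_iff hα).2 (hβ b)]

end Network

theorem stmt17_general {S0 : Type}
    (rho : Finset S0 → S0 → Prop)
    (l0 : S0 → Label) :
    IsConjComplete rho l0 ↔
      ∃ l1 : S1 rho → Label, IsCompleteExt (R1 rho) l1 ∧ ∀ x : S0, l1 (.inl x) = l0 x := by
  constructor
  · intro h
    exact ⟨extendLabelling l0, isCompleteExt_R1_iff.2 ⟨fun _ => rfl, fun _ => rfl, h⟩, fun _ => rfl⟩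
  · rintro ⟨l1, h, hl1⟩
    have hrestrict : l1 ∘ S1.arg = l0 := funext hl1
    exact hrestrict ▸ (isCompleteExt_R1_iff.1 h).2.2

/-- A labelling `λ0` of a finite conjunctive network `(S0, ρ0)` (all joint
attackers nonempty) is a complete conjunctive labelling iff it is the
restriction to `S0` of some complete extension of the enlarged ordinary
network `(S1, R1)`. -/
theorem stmt17 {S0 : Type} [Fintype S0] [DecidableEq S0]
    (rho : Finset S0 → S0 → Prop)
    (hne : ∀ Y z, rho Y z → Y.Nonempty)
    (l0 : S0 → Label) :
    IsConjComplete rho l0 ↔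
      ∃ l1 : S1 rho → Label, IsCompleteExt (R1 rho) l1 ∧ ∀ x : S0, l1 (.inl x) = l0 x :=
  stmt17_general rho l0
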